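/- arXiv:math/0009198 — 2 statements merged into one kernel-verified Lean document; each statement's English description precedes it below -/
import Mathlib

section
/- The componentwise addition map m_P : P^N_{k₁,l₁} × P^N_{k₂,l₂} → P^N_{k₁+k₂,l₁+l₂} is well-defined and surjective. -/
/-- `(α,β,γ)` is an admissible Verlinde triple of level `k`. -/
def IsAdm (k α β γ : ℕ) : Prop :=
  ∃ x y z : ℕ, x + y + z ≤ k ∧ α = x + y ∧ β = y + z ∧ γ = x + z
/-- `α, β : ℕ → ℕ` represent a Verlinde path `(α₁,…,α_N; β₁,…,β_{N-1})` of
length `N`, level `k` and weight `l`: the values at `0` are dummy zeros, and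
the conventions `β_N = α_N`, `α_i = β_i = 0` for `i > N` are imposed. -/
def IsVerPath (k l N : ℕ) (α β : ℕ → ℕ) : Prop :=
  α 0 = 0 ∧ β 0 = 0 ∧ α 1 = l ∧ β N = α N ∧
  (∀ i, N < i → α i = 0) ∧ (∀ i, N < i → β i = 0) ∧
  (∀ i, 1 ≤ i → IsAdm k (α i) (β i) (α (i + 1)))

lemma splitTriple (k₁ k₂ α β γ a : ℕ) (h : IsAdm (k₁ + k₂) α β γ)
    (h1 : a ≤ α) (h2 : a ≤ k₁) (h3 : α ≤ a + k₂) :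
    ∃ b c, b ≤ β ∧ c ≤ γ ∧ (γ = 0 → b = a) ∧ IsAdm k₁ a b c ∧
      IsAdm k₂ (α - a) (β - b) (γ - c) := by
  obtain ⟨x, y, z, hs, hα, hβ, hγ⟩ := h
  refine ⟨(a - min x a) + ((z + α) - (a + k₂)), min x a + ((z + α) - (a + k₂)),
    ?_, ?_, ?_, ⟨min x a, a - min x a, (z + α) - (a + k₂), ?_⟩,
    ⟨x - min x a, y - (a - min x a), z - ((z + α) - (a + k₂)), ?_⟩⟩ <;> omega

open Classical in
noncomputable def pick (k₁ k₂ α β γ a : ℕ) : ℕ × ℕ :=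
  if h : IsAdm (k₁ + k₂) α β γ ∧ a ≤ α ∧ a ≤ k₁ ∧ α ≤ a + k₂ then
    ⟨(splitTriple k₁ k₂ α β γ a h.1 h.2.1 h.2.2.1 h.2.2.2).choose,
     (splitTriple k₁ k₂ α β γ a h.1 h.2.1 h.2.2.1 h.2.2.2).choose_spec.choose⟩
  else (0, 0)

lemma pick_spec (k₁ k₂ α β γ a : ℕ) (h : IsAdm (k₁ + k₂) α β γ)
    (h1 : a ≤ α) (h2 : a ≤ k₁) (h3 : α ≤ a + k₂) :
    (pick k₁ k₂ α β γ a).1 ≤ β ∧ (pick k₁ k₂ α β γ a).2 ≤ γ ∧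
      (γ = 0 → (pick k₁ k₂ α β γ a).1 = a) ∧
      IsAdm k₁ a (pick k₁ k₂ α β γ a).1 (pick k₁ k₂ α β γ a).2 ∧
      IsAdm k₂ (α - a) (β - (pick k₁ k₂ α β γ a).1) (γ - (pick k₁ k₂ α β γ a).2) := by
  rw [pick]
  rw [dif_pos ⟨h, h1, h2, h3⟩]
  exact (splitTriple k₁ k₂ α β γ a h h1 h2 h3).choose_spec.choose_spec

noncomputable def Aseq (k₁ k₂ l₁ : ℕ) (α β : ℕ → ℕ) : ℕ → ℕ
  | 0 => 0
  | i + 1 =>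
      if i = 0 then l₁
      else (pick k₁ k₂ (α i) (β i) (α (i + 1)) (Aseq k₁ k₂ l₁ α β i)).2

/-- The componentwise addition map
`m_P : P^N_{k₁,l₁} × P^N_{k₂,l₂} → P^N_{k₁+k₂,l₁+l₂}` is well-defined and
surjective. -/
theorem stmt_4 (k₁ k₂ N l₁ l₂ : ℕ) (hk₁ : 1 ≤ k₁) (hk₂ : 1 ≤ k₂) (hN : 1 ≤ N)
    (hl₁ : l₁ ≤ k₁) (hl₂ : l₂ ≤ k₂) :
    (∀ α₁ β₁ α₂ β₂, IsVerPath k₁ l₁ N α₁ β₁ → IsVerPath k₂ l₂ N α₂ β₂ →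
      IsVerPath (k₁ + k₂) (l₁ + l₂) N (α₁ + α₂) (β₁ + β₂)) ∧
    (∀ α β, IsVerPath (k₁ + k₂) (l₁ + l₂) N α β →
      ∃ α₁ β₁ α₂ β₂, IsVerPath k₁ l₁ N α₁ β₁ ∧ IsVerPath k₂ l₂ N α₂ β₂ ∧
        α = α₁ + α₂ ∧ β = β₁ + β₂) := by
  constructor
  · rintro α₁ β₁ α₂ β₂ ⟨h01, h02, h03, h04, h05, h06, h07⟩ ⟨g01, g02, g03, g04, g05, g06, g07⟩
    refine ⟨by simp [h01, g01], by simp [h02, g02], by simp [h03, g03],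
      by simp [h04, g04], fun i hi => by simp [h05 i hi, g05 i hi],
      fun i hi => by simp [h06 i hi, g06 i hi], fun i hi => ?_⟩
    obtain ⟨x, y, z, hs, ha, hb, hc⟩ := h07 i hi
    obtain ⟨x', y', z', hs', ha', hb', hc'⟩ := g07 i hi
    exact ⟨x + x', y + y', z + z', by omega, by simp [ha, ha']; omega,
      by simp [hb, hb']; omega, by simp [hc, hc']; omega⟩
  · rintro α β hP
    obtain ⟨h01, h02, h03, h04, h05, h06, h07⟩ := hP
    set A := Aseq k₁ k₂ l₁ α β with hA
    have hA0 : A 0 = 0 := rfl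
    have hA1 : A 1 = l₁ := rfl
    have hAstep : ∀ i, 1 ≤ i →
        A (i + 1) = (pick k₁ k₂ (α i) (β i) (α (i + 1)) (A i)).2 := by
      intro i hi
      match i, hi with
      | (j + 1), _ => simp [hA, Aseq]
    -- invariant
    have hinv : ∀ i, 1 ≤ i → A i ≤ α i ∧ A i ≤ k₁ ∧ α i ≤ A i + k₂ := by
      intro i hi
      induction i with
      | zero => omega
      | succ j ih =>
        rcases Nat.eq_or_lt_of_le hi with h | h
        · have hj0 : j = 0 := by omega
          subst hj0
          simp only [hA1, h03]
          omega
        · have hj : 1 ≤ j := by omega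
          obtain ⟨i1, i2, i3⟩ := ih hj
          have hs := pick_spec k₁ k₂ (α j) (β j) (α (j + 1)) (A j) (h07 j hj) i1 i2 i3
          rw [hAstep j hj]
          obtain ⟨s1, s2, s3, ⟨x, y, z, q1, q2, q3, q4⟩, ⟨x', y', z', q1', q2', q3', q4'⟩⟩ := hs
          refine ⟨s2, by omega, by omega⟩
    set B : ℕ → ℕ := fun i =>
      if i = 0 then 0 else (pick k₁ k₂ (α i) (β i) (α (i + 1)) (A i)).1 with hB
    have hB0 : B 0 = 0 := rfl
    have hBi : ∀ i, 1 ≤ i → B i = (pick k₁ k₂ (α i) (β i) (α (i + 1)) (A i)).1 := by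
      intro i hi; simp [hB]; omega
    have hspec : ∀ i, 1 ≤ i →
        (pick k₁ k₂ (α i) (β i) (α (i + 1)) (A i)).1 ≤ β i ∧
        (pick k₁ k₂ (α i) (β i) (α (i + 1)) (A i)).2 ≤ α (i + 1) ∧
        (α (i + 1) = 0 → (pick k₁ k₂ (α i) (β i) (α (i + 1)) (A i)).1 = A i) ∧
        IsAdm k₁ (A i) (pick k₁ k₂ (α i) (β i) (α (i + 1)) (A i)).1
          (pick k₁ k₂ (α i) (β i) (α (i + 1)) (A i)).2 ∧
        IsAdm k₂ (α i - A i) (β i - (pick k₁ k₂ (α i) (β i) (α (i + 1)) (A i)).1)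
          (α (i + 1) - (pick k₁ k₂ (α i) (β i) (α (i + 1)) (A i)).2) := by
      intro i hi
      obtain ⟨i1, i2, i3⟩ := hinv i hi
      exact pick_spec k₁ k₂ (α i) (β i) (α (i + 1)) (A i) (h07 i hi) i1 i2 i3
    have hBle : ∀ i, B i ≤ β i := by
      intro i
      rcases Nat.eq_zero_or_pos i with h | h
      · simp [h, hB0, h02]
      · rw [hBi i h]; exact (hspec i h).1
    have hAle : ∀ i, A i ≤ α i := by
      intro i
      rcases Nat.eq_zero_or_pos i with h | h
      · simp [h, hA0, h01]
      · exact (hinv i h).1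
    have hBN : B N = A N := by
      rw [hBi N hN]
      exact (hspec N hN).2.2.1 (h05 (N + 1) (by omega))
    refine ⟨A, B, fun i => α i - A i, fun i => β i - B i, ⟨hA0, hB0, hA1, hBN,
        ?_, ?_, ?_⟩, ⟨?_, ?_, ?_, ?_, ?_, ?_, ?_⟩, ?_, ?_⟩
    · intro i hi
      have := hAle i
      have := h05 i hi
      omega
    · intro i hi
      have := hBle i
      have := h06 i hi
      omega
    · intro i hi
      rw [hBi i hi, hAstep i hi]
      exact (hspec i hi).2.2.2.1
    · simp [hA0, h01]
    · simp [hB0, h02]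
    · simp [hA1, h03]
    · simp [hBN, h04]
    · intro i hi; simp [h05 i hi]
    · intro i hi; simp [h06 i hi]
    · intro i hi
      show IsAdm k₂ (α i - A i) (β i - B i) (α (i + 1) - A (i + 1))
      rw [hBi i hi, hAstep i hi]
      exact (hspec i hi).2.2.2.2
    · funext i
      have := hAle i
      simp only [Pi.add_apply]
      omega
    · funext i
      have := hBle i
      simp only [Pi.add_apply]
      omega
end

section
/- For every N ≥ 1 and 0 ≤ l ≤ k, the cardinality of the set of combinatorial paths C^{(N)}_{k,l} equals the Verlinde number d^{(N)}_{k,l}. -/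
/-- `x(α,β,γ) = (α+γ-β)/2` (exact on admissible triples). -/
def xA (α β γ : ℕ) : ℕ := (α + γ - β) / 2
/-- `y(α,β,γ) = (α+β-γ)/2` (exact on admissible triples). -/
def yA (α β γ : ℕ) : ℕ := (α + β - γ) / 2
/-- `z(α,β,γ) = (β+γ-α)/2` (exact on admissible triples). -/
def zA (α β γ : ℕ) : ℕ := (β + γ - α) / 2
/-- `a, b : ℕ → ℕ` represent a combinatorial path
`(a_{N-1},…,a_0; b_{N-1},…,b_1)` of length `N`, level `k` and weight `l`:
`b 0 = 0` is a dummy value, entries vanish from index `N` on, and the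
conventions `b_{-1} = l`, `b_∞ = k`, `a_{-1} = a_∞ = 0` are built into the
inequalities (the cases `i = -1` and `j = ∞` of the trapezoid condition are
listed separately). -/
def IsCombPath (k l N : ℕ) (a b : ℕ → ℕ) : Prop :=
  (∀ i, a i ≤ k) ∧ (∀ i, b i ≤ k) ∧
  b 0 = 0 ∧
  (∀ i, N ≤ i → a i = 0) ∧ (∀ i, N ≤ i → b i = 0) ∧
  a 0 ≤ l ∧
  (∀ i, a i + b (i + 1) + a (i + 1) ≤ k) ∧
  (∀ i, b i + a i + b (i + 1) ≤ k) ∧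
  (∀ i j : ℕ, i < j →
    ∑ s ∈ Finset.Icc i j, b s ≤ k + ∑ s ∈ Finset.Ico (i + 1) (j - 1), a s) ∧
  (∀ j : ℕ, l + ∑ s ∈ Finset.Icc 0 j, b s ≤ k + ∑ s ∈ Finset.Ico 0 (j - 1), a s) ∧
  (∀ i : ℕ, (∑ s ∈ Finset.Icc i N, b s) + k ≤ k + ∑ s ∈ Finset.Icc (i + 1) N, a s) ∧
  (l + (∑ s ∈ Finset.Icc 0 N, b s) + k ≤ k + ∑ s ∈ Finset.Icc 0 N, a s)

open Finset

-- sum helpers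
lemma sum_shift_Icc (f : ℕ → ℕ) (i j : ℕ) :
    ∑ s ∈ Finset.Icc (i+1) (j+1), f s = ∑ s ∈ Finset.Icc i j, f (s+1) := by
  rw [← Finset.map_add_right_Icc i j 1, Finset.sum_map]
  rfl

lemma sum_shift_Ico (f : ℕ → ℕ) (i j : ℕ) :
    ∑ s ∈ Finset.Ico (i+1) (j+1), f s = ∑ s ∈ Finset.Ico i j, f (s+1) := by
  rw [← Finset.map_add_right_Ico i j 1, Finset.sum_map]
  rfl

lemma sum_Icc_split_left (f : ℕ → ℕ) {i j : ℕ} (h : i ≤ j) :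
    ∑ s ∈ Finset.Icc i j, f s = f i + ∑ s ∈ Finset.Icc (i+1) j, f s := by
  have : Finset.Icc i j = insert i (Finset.Icc (i+1) j) := by
    ext x; simp only [Finset.mem_Icc, Finset.mem_insert]; omega
  rw [this, Finset.sum_insert (by simp)]

lemma sum_Ico_split_left (f : ℕ → ℕ) {i j : ℕ} (h : i < j) :
    ∑ s ∈ Finset.Ico i j, f s = f i + ∑ s ∈ Finset.Ico (i+1) j, f s := by
  have : Finset.Ico i j = insert i (Finset.Ico (i+1) j) := by
    ext x; simp only [Finset.mem_Ico, Finset.mem_insert]; omega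
  rw [this, Finset.sum_insert (by simp)]

lemma sum_Ico_le_split (f : ℕ → ℕ) (j : ℕ) :
    ∑ s ∈ Finset.Ico 0 j, f s ≤ f 0 + ∑ s ∈ Finset.Ico 1 j, f s := by
  rcases Nat.eq_zero_or_pos j with h | h
  · subst h; simp
  · rw [sum_Ico_split_left f h]

lemma sum_mono_Icc (f : ℕ → ℕ) {i i' j : ℕ} (h : i ≤ i') :
    ∑ s ∈ Finset.Icc i' j, f s ≤ ∑ s ∈ Finset.Icc i j, f s :=
  Finset.sum_le_sum_of_subset (Finset.Icc_subset_Icc_left h)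

lemma sum_mono_Ico (f : ℕ → ℕ) {i i' j : ℕ} (h : i ≤ i') :
    ∑ s ∈ Finset.Ico i' j, f s ≤ ∑ s ∈ Finset.Ico i j, f s :=
  Finset.sum_le_sum_of_subset (Finset.Ico_subset_Ico_left h)


lemma IsAdm.eqs {k α β γ : ℕ} (h : IsAdm k α β γ) :
    xA α β γ + yA α β γ = α ∧ yA α β γ + zA α β γ = β ∧
      xA α β γ + zA α β γ = γ ∧ xA α β γ + yA α β γ + zA α β γ ≤ k := by
  obtain ⟨x, y, z, h1, h2, h3, h4⟩ := h
  have hx : xA α β γ = x := by unfold xA; omega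
  have hy : yA α β γ = y := by unfold yA; omega
  have hz : zA α β γ = z := by unfold zA; omega
  refine ⟨by omega, by omega, by omega, by omega⟩


def tailA (a : ℕ → ℕ) : ℕ → ℕ := fun i => a (i+1)
def tailB (b : ℕ → ℕ) : ℕ → ℕ := fun i => if i = 0 then 0 else b (i+1)
def fL' (l : ℕ) (a b : ℕ → ℕ) : ℕ := max (l - a 0 + b 1) (a 1 + b 1)
def fL'' (l : ℕ) (a b : ℕ → ℕ) : ℕ := a 0 + b 1 + (a 0 + a 1 - l)

lemma forward {k l N : ℕ} {a b : ℕ → ℕ} (hl : l ≤ k)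
    (h : IsCombPath k l (N+1) a b) :
    IsAdm k l (fL'' l a b) (fL' l a b) ∧ IsCombPath k (fL' l a b) N (tailA a) (tailB b) := by
  obtain ⟨hak, hbk, hb0, hav, hbv, ha0, h7, h8, h9, h10, h11, h12⟩ := h
  -- basic facts
  have hb1k : l + b 1 ≤ k := by
    have := h10 1
    rw [sum_Icc_split_left b (by omega), Finset.Icc_self, Finset.sum_singleton] at this
    simpa [hb0] using this
  have h8i1 : b 1 + a 1 + b 2 ≤ k := h8 1
  have h7i0 : a 0 + b 1 + a 1 ≤ k := h7 0
  have hmax : fL' l a b = l - a 0 + b 1 + (a 0 + a 1 - l) := by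
    unfold fL'
    rcases Nat.le_total (a 0 + a 1) l with hc | hc
    · rw [Nat.max_eq_left (by omega)]; omega
    · rw [Nat.max_eq_right (by omega)]; omega
  have hfl'k : fL' l a b ≤ k := by rw [hmax]; omega
  -- sum conversions
  have tbsum : ∀ i j, 1 ≤ i → ∑ s ∈ Finset.Icc i j, tailB b s = ∑ s ∈ Finset.Icc (i+1) (j+1), b s := by
    intro i j hi
    rw [sum_shift_Icc]
    refine Finset.sum_congr rfl fun s hs => ?_
    simp only [Finset.mem_Icc] at hs
    unfold tailB; rw [if_neg (by omega)]
  have tbsum0 : ∀ j, ∑ s ∈ Finset.Icc 0 j, tailB b s = ∑ s ∈ Finset.Icc 1 j, tailB b s := by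
    intro j
    rw [sum_Icc_split_left _ (Nat.zero_le j)]
    simp [tailB]
  have tasumIcc : ∀ i j : ℕ, ∑ s ∈ Finset.Icc i j, tailA a s = ∑ s ∈ Finset.Icc (i+1) (j+1), a s := by
    intro i j; rw [sum_shift_Icc]; rfl
  have tasumIco : ∀ i j : ℕ, ∑ s ∈ Finset.Ico i j, tailA a s = ∑ s ∈ Finset.Ico (i+1) (j+1), a s := by
    intro i j; rw [sum_shift_Ico]; rfl
  constructor
  · exact ⟨l - a 0, a 0, b 1 + (a 0 + a 1 - l), by omega, by omega,
      by unfold fL''; omega, by rw [hmax]; omega⟩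
  refine ⟨fun i => hak (i+1), ?_, by simp [tailB], fun i hi => hav (i+1) (by omega), ?_, ?_, ?_, ?_, ?_, ?_, ?_, ?_⟩
  · intro i; unfold tailB; split
    · omega
    · exact hbk _
  · intro i hi; unfold tailB; split
    · rfl
    · exact hbv _ (by omega)
  · exact le_trans (Nat.le_add_right _ _) (le_max_right _ _)
  · intro i
    show tailA a i + tailB b (i+1) + tailA a (i+1) ≤ k
    unfold tailA tailB; rw [if_neg (by omega)]
    exact h7 (i+1)
  · intro i
    match i with
    | 0 =>
      show tailB b 0 + tailA a 0 + tailB b 1 ≤ k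
      have e0 : tailB b 0 = 0 := rfl
      have e1 : tailB b 1 = b 2 := rfl
      have e2 : tailA a 0 = a 1 := rfl
      rw [e0, e1, e2]; omega
    | (i+1) =>
      show tailB b (i+1) + tailA a (i+1) + tailB b (i+2) ≤ k
      unfold tailA tailB
      rw [if_neg (by omega), if_neg (by omega)]
      exact h8 (i+1+1)
  · -- cond 9
    intro i j hij
    match i with
    | (i+1) =>
      rw [tbsum _ _ (by omega), tasumIco]
      have hj : j - 1 + 1 = j := by omega
      rw [hj]
      have h1 := h9 (i+2) (j+1) (by omega)
      simp only [Nat.add_sub_cancel] at h1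
      convert h1 using 3 <;> omega
    | 0 =>
      rw [tbsum0, tasumIco]
      have hj : j - 1 + 1 = j := by omega
      rw [hj]
      rcases Nat.lt_or_ge j 2 with hj2 | hj2
      · -- j = 1
        have : j = 1 := by omega
        subst this
        rw [Finset.Icc_self, Finset.sum_singleton]
        have : tailB b 1 ≤ k := by unfold tailB; rw [if_neg (by omega)]; exact hbk 2
        omega
      · rw [tbsum _ _ (by omega)]
        have h1 := h9 2 (j+1) (by omega)
        have h2 : ∑ s ∈ Finset.Ico 3 j, a s ≤ ∑ s ∈ Finset.Ico 2 j, a s := sum_mono_Ico a (by omega)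
        simp only [Nat.add_sub_cancel, Nat.reduceAdd] at h1 h2 ⊢
        omega
  · -- cond 10
    intro j
    match j with
    | 0 =>
      rw [Finset.Icc_self, Finset.sum_singleton]
      have e0 : tailB b 0 = 0 := rfl
      rw [e0]
      omega
    | (j+1) =>
      rw [tbsum0, tbsum _ _ (by omega), tasumIco]
      simp only [Nat.add_sub_cancel]
      have key1 : (l - a 0 + b 1) + ∑ s ∈ Finset.Icc 2 (j+2), b s ≤ k + ∑ s ∈ Finset.Ico 1 (j+1), a s := by
        have h1 := h10 (j+2)
        have e : j + 2 - 1 = j + 1 := by omega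
        rw [e, sum_Icc_split_left b (by omega), sum_Icc_split_left b (by omega),
          sum_Ico_split_left a (by omega)] at h1
        simp only [Nat.reduceAdd] at h1 ⊢
        omega
      have key2 : (a 1 + b 1) + ∑ s ∈ Finset.Icc 2 (j+2), b s ≤ k + ∑ s ∈ Finset.Ico 1 (j+1), a s := by
        rcases Nat.lt_or_ge j 1 with hj1 | hj1
        · have : j = 0 := by omega
          subst this
          rw [Finset.Icc_self, Finset.sum_singleton]
          omega
        · have h1 := h9 1 (j+2) (by omega)
          have e : j + 2 - 1 = j + 1 := by omega
          rw [e, sum_Icc_split_left b (by omega : 1 ≤ j + 2)] at h1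
          rw [sum_Ico_split_left a (by omega : 1 < j + 1)]
          simp only [Nat.reduceAdd] at h1 ⊢
          omega
      unfold fL'
      rcases Nat.le_total (l - a 0 + b 1) (a 1 + b 1) with hc | hc
      · rw [Nat.max_eq_right hc]; exact key2
      · rw [Nat.max_eq_left hc]; exact key1
  · -- cond 11
    intro i
    match i with
    | (i+1) =>
      rw [tbsum _ _ (by omega), tasumIcc]
      exact h11 (i+2)
    | 0 =>
      rw [tbsum0, tbsum _ _ (by omega), tasumIcc]
      have h1 := h11 2
      have h2 : ∑ s ∈ Finset.Icc 3 (N+1), a s ≤ ∑ s ∈ Finset.Icc 2 (N+1), a s := sum_mono_Icc a (by omega)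
      simp only [Nat.reduceAdd] at h1 h2 ⊢
      omega
  · -- cond 12
    rw [tbsum0, tbsum _ _ (by omega), tasumIcc]
    simp only [Nat.reduceAdd]
    have key1 : (l - a 0 + b 1) + ∑ s ∈ Finset.Icc 2 (N+1), b s ≤ ∑ s ∈ Finset.Icc 1 (N+1), a s := by
      have h1 := h12
      rw [sum_Icc_split_left b (by omega), sum_Icc_split_left b (by omega),
        sum_Icc_split_left a (by omega : 0 ≤ N + 1)] at h1
      simp only [Nat.reduceAdd] at h1 ⊢
      omega
    have key2 : (a 1 + b 1) + ∑ s ∈ Finset.Icc 2 (N+1), b s ≤ ∑ s ∈ Finset.Icc 1 (N+1), a s := by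
      have h1 := h11 1
      rw [sum_Icc_split_left b (by omega : 1 ≤ N + 1)] at h1
      rw [sum_Icc_split_left a (by omega : 1 ≤ N + 1)]
      simp only [Nat.reduceAdd] at h1 ⊢
      omega
    unfold fL'
    rcases Nat.le_total (l - a 0 + b 1) (a 1 + b 1) with hc | hc
    · rw [Nat.max_eq_right hc]; omega
    · rw [Nat.max_eq_left hc]; omega

lemma sum_shift_down_Icc (f : ℕ → ℕ) {i j : ℕ} (hi : 1 ≤ i) (hj : 1 ≤ j) :
    ∑ s ∈ Finset.Icc i j, f (s-1) = ∑ s ∈ Finset.Icc (i-1) (j-1), f s := by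
  have e1 : i - 1 + 1 = i := by omega
  have e2 : j - 1 + 1 = j := by omega
  rw [← e1, ← e2, sum_shift_Icc]
  simp

lemma sum_shift_down_Ico (f : ℕ → ℕ) {i j : ℕ} (hi : 1 ≤ i) (hj : 1 ≤ j) :
    ∑ s ∈ Finset.Ico i j, f (s-1) = ∑ s ∈ Finset.Ico (i-1) (j-1), f s := by
  have e1 : i - 1 + 1 = i := by omega
  have e2 : j - 1 + 1 = j := by omega
  rw [← e1, ← e2, sum_shift_Ico]
  simp

def consA (y : ℕ) (a' : ℕ → ℕ) : ℕ → ℕ := fun i => if i = 0 then y else a' (i-1)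
def consB (b1 : ℕ) (b' : ℕ → ℕ) : ℕ → ℕ := fun i => if i = 0 then 0 else if i = 1 then b1 else b' (i-1)

lemma backward {k l N l' x y z : ℕ} {a' b' : ℕ → ℕ} (hN : 1 ≤ N) (hl : l ≤ k)
    (hxy : x + y = l) (hxz : x + z = l') (hsum : x + y + z ≤ k)
    (h : IsCombPath k l' N a' b') :
    IsCombPath k l (N+1) (consA y a') (consB (min z (l' - a' 0)) b') := by
  obtain ⟨hak, hbk, hb0, hav, hbv, ha0, h7, h8, h9, h10, h11, h12⟩ := h
  set b1 := min z (l' - a' 0) with hb1def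
  set A := consA y a' with hA
  set B := consB b1 b' with hB
  have hb1z : b1 ≤ z := min_le_left _ _
  have hb1l : b1 + a' 0 ≤ l' := by
    have := min_le_right z (l' - a' 0); omega
  have t10_1 : l' + b' 1 ≤ k := by
    have := h10 1
    rw [sum_Icc_split_left b' (by omega), Finset.Icc_self, Finset.sum_singleton] at this
    simpa [hb0] using this
  have eA0 : A 0 = y := rfl
  have eAs : ∀ i, A (i+1) = a' i := fun i => rfl
  have eB0 : B 0 = 0 := rfl
  have eB1 : B 1 = b1 := rfl
  have eBs : ∀ i, B (i+2) = b' (i+1) := fun i => rfl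
  have cA : ∀ i j, 1 ≤ i → 1 ≤ j →
      ∑ s ∈ Finset.Icc i j, A s = ∑ s ∈ Finset.Icc (i-1) (j-1), a' s := by
    intro i j hi hj
    rw [← sum_shift_down_Icc a' hi hj]
    refine Finset.sum_congr rfl fun s hs => ?_
    simp only [Finset.mem_Icc] at hs
    rw [hA]; unfold consA; rw [if_neg (by omega)]
  have cAo : ∀ i j, 1 ≤ i → 1 ≤ j →
      ∑ s ∈ Finset.Ico i j, A s = ∑ s ∈ Finset.Ico (i-1) (j-1), a' s := by
    intro i j hi hj
    rw [← sum_shift_down_Ico a' hi hj]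
    refine Finset.sum_congr rfl fun s hs => ?_
    simp only [Finset.mem_Ico] at hs
    rw [hA]; unfold consA; rw [if_neg (by omega)]
  have cB : ∀ i j, 2 ≤ i → 1 ≤ j →
      ∑ s ∈ Finset.Icc i j, B s = ∑ s ∈ Finset.Icc (i-1) (j-1), b' s := by
    intro i j hi hj
    rw [← sum_shift_down_Icc b' (by omega) hj]
    refine Finset.sum_congr rfl fun s hs => ?_
    simp only [Finset.mem_Icc] at hs
    rw [hB]; unfold consB; rw [if_neg (by omega), if_neg (by omega)]
  -- key lemma for condition 9 at i = 1
  have key9 : ∀ j, 2 ≤ j → ∑ s ∈ Finset.Icc 1 j, B s ≤ k + ∑ s ∈ Finset.Ico 2 (j-1), A s := by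
    intro j hj
    rw [sum_Icc_split_left B (by omega), eB1, cB 2 j (by omega) (by omega)]
    rcases Nat.lt_or_ge j 3 with hj3 | hj3
    · -- j = 2 : RHS inner sum is empty, LHS inner is Icc 1 1 b'
      have hj2 : j = 2 := by omega
      subst hj2
      have e : (2:ℕ) - 1 = 1 := rfl
      rw [e, Finset.Icc_self, Finset.sum_singleton]
      omega
    · have h1 := h10 (j-1)
      rw [sum_Icc_split_left b' (by omega : 0 ≤ j - 1)] at h1
      rw [cAo 2 (j-1) (by omega) (by omega)]
      have e1 : (2:ℕ) - 1 = 1 := rfl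
      have e2 : j - 1 - 1 = j - 2 := by omega
      rw [e1, e2]
      rw [e2] at h1
      have hle := sum_Ico_le_split a' (j-2)
      have e3 : (0:ℕ) + 1 = 1 := rfl
      rw [e3] at h1
      omega
  -- key lemma for condition 11 at i = 1
  have key11 : ∑ s ∈ Finset.Icc 1 (N+1), B s + k ≤ k + ∑ s ∈ Finset.Icc 2 (N+1), A s := by
    rw [sum_Icc_split_left B (by omega), eB1, cB 2 (N+1) (by omega) (by omega),
      cA 2 (N+1) (by omega) (by omega)]
    simp only [Nat.add_sub_cancel]
    have e1 : (2:ℕ) - 1 = 1 := rfl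
    rw [e1]
    have h1 := h12
    rw [sum_Icc_split_left b' (by omega : 0 ≤ N), sum_Icc_split_left a' (by omega : 0 ≤ N)] at h1
    have e3 : (0:ℕ) + 1 = 1 := rfl
    rw [e3] at h1
    omega
  refine ⟨?_, ?_, eB0, ?_, ?_, by rw [eA0]; omega, ?_, ?_, ?_, ?_, ?_, ?_⟩
  · -- a bounds
    intro i
    match i with
    | 0 => rw [eA0]; omega
    | (i+1) => rw [eAs]; exact hak i
  · -- b bounds
    intro i
    match i with
    | 0 => rw [eB0]; omega
    | 1 => rw [eB1]; omega
    | (i+2) => rw [eBs]; exact hbk (i+1)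
  · -- a vanishing
    intro i hi
    have hi1 : i ≠ 0 := by omega
    rw [hA]; unfold consA; rw [if_neg hi1]
    exact hav _ (by omega)
  · -- b vanishing
    intro i hi
    rw [hB]; unfold consB; rw [if_neg (by omega), if_neg (by omega)]
    exact hbv _ (by omega)
  · -- condition 7
    intro i
    match i with
    | 0 =>
      rw [eA0, eB1, eAs]
      omega
    | (i+1) =>
      rw [eAs, eAs, eBs]
      exact h7 i
  · -- condition 8
    intro i
    match i with
    | 0 => rw [eB0, eA0, eB1]; omega
    | 1 =>
      have eB2 : B 2 = b' 1 := rfl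
      have eA1 : A 1 = a' 0 := rfl
      rw [eB1, eA1, eB2]; omega
    | (i+2) => rw [eBs, eAs, eBs]; exact h8 (i+1)
  · -- condition 9
    intro i j hij
    match i with
    | 0 =>
      rw [sum_Icc_split_left B (by omega), eB0]
      rcases Nat.lt_or_ge j 2 with hj2 | hj2
      · -- j = 1
        have hj1 : j = 1 := by omega
        subst hj1
        rw [Finset.Icc_self, Finset.sum_singleton, eB1]
        omega
      · have h1 := key9 j hj2
        have h2 : ∑ s ∈ Finset.Ico 2 (j-1), A s ≤ ∑ s ∈ Finset.Ico 1 (j-1), A s :=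
          sum_mono_Ico A (by omega)
        simp only [Nat.zero_add]
        omega
    | 1 =>
      have h1 := key9 j (by omega)
      simpa using h1
    | (i+2) =>
      rw [cB (i+2) j (by omega) (by omega)]
      have h1 := h9 (i+1) (j-1) (by omega)
      rw [cAo (i+3) (j-1) (by omega) (by omega)]
      have e1 : i + 2 - 1 = i + 1 := by omega
      have e2 : i + 3 - 1 = i + 2 := by omega
      have e3 : j - 1 - 1 = j - 2 := by omega
      rw [e1, e2, e3]
      have e4 : i + 1 + 1 = i + 2 := by omega
      rw [e4] at h1
      exact h1
  · -- condition 10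
    intro j
    match j with
    | 0 =>
      rw [Finset.Icc_self, Finset.sum_singleton, eB0]
      omega
    | 1 =>
      rw [sum_Icc_split_left B (by omega), Finset.Icc_self, Finset.sum_singleton, eB0, eB1]
      omega
    | (j+2) =>
      have e1 : (2:ℕ) - 1 = 1 := rfl
      have e2 : (1:ℕ) - 1 = 0 := rfl
      have e3 : (0:ℕ) + 1 = 1 := rfl
      have eJ : j + 2 - 1 = j + 1 := by omega
      have eJ2 : j + 1 - 1 = j := by omega
      rw [sum_Icc_split_left B (by omega), eB0, sum_Icc_split_left B (by omega), eB1,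
        cB 2 (j+2) (by omega) (by omega), e1, eJ,
        sum_Ico_split_left A (by omega : 0 < j + 1), eA0,
        cAo 1 (j+1) (by omega) (by omega), e2, eJ2]
      have h1 := h10 (j+1)
      rw [eJ2, sum_Icc_split_left b' (by omega : 0 ≤ j + 1), e3] at h1
      omega
  · -- condition 11
    intro i
    match i with
    | 0 =>
      rw [sum_Icc_split_left B (by omega), eB0]
      have h1 := key11
      have h2 : ∑ s ∈ Finset.Icc 2 (N+1), A s ≤ ∑ s ∈ Finset.Icc 1 (N+1), A s :=
        sum_mono_Icc A (by omega)
      simp only [Nat.zero_add]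
      omega
    | 1 =>
      simp only [Nat.reduceAdd]
      exact key11
    | (i+2) =>
      rw [cB (i+2) (N+1) (by omega) (by omega), cA (i+3) (N+1) (by omega) (by omega)]
      simp only [Nat.add_sub_cancel]
      have e1 : i + 2 - 1 = i + 1 := by omega
      have e2 : i + 3 - 1 = i + 2 := by omega
      rw [e1, e2]
      have h1 := h11 (i+1)
      have e4 : i + 1 + 1 = i + 2 := by omega
      rw [e4] at h1
      exact h1
  · -- condition 12
    rw [sum_Icc_split_left B (by omega), eB0, sum_Icc_split_left B (by omega), eB1,
      cB 2 (N+1) (by omega) (by omega),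
      sum_Icc_split_left A (by omega : 0 ≤ N + 1), eA0, cA 1 (N+1) (by omega) (by omega)]
    simp only [Nat.add_sub_cancel]
    have e1 : (2:ℕ) - 1 = 1 := rfl
    have e2 : (1:ℕ) - 1 = 0 := rfl
    rw [e1, e2]
    have h1 := h12
    rw [sum_Icc_split_left b' (by omega : 0 ≤ N)] at h1
    have e3 : (0:ℕ) + 1 = 1 := rfl
    rw [e3] at h1
    omega

lemma leftinv {k l N : ℕ} {a b : ℕ → ℕ} (h : IsCombPath k l (N+1) a b) :
    yA l (fL'' l a b) (fL' l a b) = a 0 ∧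
    min (zA l (fL'' l a b) (fL' l a b)) (fL' l a b - tailA a 0) = b 1 ∧
    consA (a 0) (tailA a) = a ∧ consB (b 1) (tailB b) = b := by
  obtain ⟨hak, hbk, hb0, hav, hbv, ha0, h7, h8, h9, h10, h11, h12⟩ := h
  have e1 : tailA a 0 = a 1 := rfl
  refine ⟨?_, ?_, ?_, ?_⟩
  · unfold yA fL'' fL'; omega
  · rw [e1]; unfold zA fL'' fL'; omega
  · funext i
    cases i with
    | zero => rfl
    | succ i => rfl
  · funext i
    match i with
    | 0 => exact hb0.symm
    | 1 => rfl
    | (i+2) => rfl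

lemma rightinv {l l' x y z : ℕ} {a' b' : ℕ → ℕ} (hb'0 : b' 0 = 0) (ha0 : a' 0 ≤ l')
    (hxy : x + y = l) (hxz : x + z = l') :
    fL' l (consA y a') (consB (min z (l' - a' 0)) b') = l' ∧
    fL'' l (consA y a') (consB (min z (l' - a' 0)) b') = y + z ∧
    tailA (consA y a') = a' ∧ tailB (consB (min z (l' - a' 0)) b') = b' := by
  have eA0 : consA y a' 0 = y := rfl
  have eA1 : consA y a' 1 = a' 0 := rfl
  have eB1 : consB (min z (l' - a' 0)) b' 1 = min z (l' - a' 0) := rfl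
  refine ⟨?_, ?_, ?_, ?_⟩
  · unfold fL'; rw [eA0, eA1, eB1]; omega
  · unfold fL''; rw [eA0, eA1, eB1]; omega
  · funext i
    cases i with
    | zero => rfl
    | succ i => rfl
  · funext i
    match i with
    | 0 => exact hb'0.symm
    | 1 => rfl
    | (i+2) => rfl

instance path_finite (k l N : ℕ) : Finite {p : (ℕ → ℕ) × (ℕ → ℕ) // IsCombPath k l N p.1 p.2} := by
  let F : {p : (ℕ → ℕ) × (ℕ → ℕ) // IsCombPath k l N p.1 p.2} →
      (Fin (N+1) → Fin (k+1)) × (Fin (N+1) → Fin (k+1)) :=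
    fun p => (fun i => ⟨p.1.1 i, by have := p.2.1 i; omega⟩,
              fun i => ⟨p.1.2 i, by have := p.2.2.1 i; omega⟩)
  apply Finite.of_injective F
  rintro ⟨⟨a, b⟩, hp⟩ ⟨⟨c, d⟩, hq⟩ hpq
  simp only [F, Prod.mk.injEq] at hpq
  obtain ⟨h1, h2⟩ := hpq
  have ha : a = c := by
    funext i
    rcases Nat.lt_or_ge i (N+1) with hi | hi
    · exact congrArg Fin.val (congrFun h1 ⟨i, hi⟩)
    · have e1 : a i = 0 := hp.2.2.2.1 i (by omega)
      have e2 : c i = 0 := hq.2.2.2.1 i (by omega)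
      rw [e1, e2]
  have hb : b = d := by
    funext i
    rcases Nat.lt_or_ge i (N+1) with hi | hi
    · exact congrArg Fin.val (congrFun h2 ⟨i, hi⟩)
    · have e1 : b i = 0 := hp.2.2.2.2.1 i (by omega)
      have e2 : d i = 0 := hq.2.2.2.2.1 i (by omega)
      rw [e1, e2]
  simp [ha, hb]

lemma base_card (k l : ℕ) (hl : l ≤ k) :
    Nat.card {p : (ℕ → ℕ) × (ℕ → ℕ) // IsCombPath k l 1 p.1 p.2} = 1 := by
  have huniq : ∀ a b : ℕ → ℕ, IsCombPath k l 1 a b →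
      a = (fun i => if i = 0 then l else 0) ∧ b = (fun _ => 0) := by
    intro a b h
    obtain ⟨hak, hbk, hb0, hav, hbv, ha0, h7, h8, h9, h10, h11, h12⟩ := h
    have hb : b = fun _ => 0 := by
      funext i
      cases i with
      | zero => exact hb0
      | succ i => exact hbv _ (by omega)
    have hsb : ∑ s ∈ Finset.Icc 0 1, b s = 0 := by
      rw [sum_Icc_split_left b (by omega), Finset.Icc_self, Finset.sum_singleton, hb0,
        hbv 1 (by omega)]
    have hsa : ∑ s ∈ Finset.Icc 0 1, a s = a 0 := by
      rw [sum_Icc_split_left a (by omega), Finset.Icc_self, Finset.sum_singleton,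
        hav 1 (by omega)]
      omega
    have ha0' : l ≤ a 0 := by
      have := h12
      rw [hsb, hsa] at this
      omega
    constructor
    · funext i
      cases i with
      | zero =>
        show a 0 = l
        omega
      | succ i => rw [if_neg (by omega)]; exact hav _ (by omega)
    · exact hb
  have hmem : IsCombPath k l 1 (fun i => if i = 0 then l else 0) (fun _ => 0) := by
    refine ⟨?_, ?_, rfl, ?_, ?_, by simp, ?_, ?_, ?_, ?_, ?_, ?_⟩
    · intro i
      show (if i = 0 then l else 0) ≤ k
      split <;> omega
    · intro i
      show (0:ℕ) ≤ k
      omega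
    · intro i hi
      show (if i = 0 then l else 0) = 0
      rw [if_neg (by omega)]
    · intro i hi; rfl
    · intro i
      show (if i = 0 then l else 0) + 0 + (if i + 1 = 0 then l else 0) ≤ k
      rw [if_neg (show ¬(i + 1 = 0) by omega)]
      split <;> omega
    · intro i
      show 0 + (if i = 0 then l else 0) + 0 ≤ k
      split <;> omega
    · intro i j hij; simp
    · intro j
      simp only [Finset.sum_const_zero, Nat.add_zero]
      exact le_trans hl (Nat.le_add_right _ _)
    · intro i; simp
    · have h1 : ∑ s ∈ Finset.Icc 0 1, (fun i => if i = 0 then l else 0) s = l := by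
        rw [sum_Icc_split_left _ (by omega), Finset.Icc_self, Finset.sum_singleton]
        show (if (0:ℕ) = 0 then l else 0) + (if (1:ℕ) = 0 then l else 0) = l
        simp
      rw [h1]
      simp; omega
  rw [Nat.card_eq_one_iff_unique]
  constructor
  · constructor
    rintro ⟨⟨a, b⟩, hp⟩ ⟨⟨c, d⟩, hq⟩
    obtain ⟨ha, hb⟩ := huniq a b hp
    obtain ⟨hc, hd⟩ := huniq c d hq
    simp [ha, hb, hc, hd]
  · exact ⟨⟨(_, _), hmem⟩⟩


open Classical in
/-- The Verlinde numbers `d^{(N)}_{k,l}`. -/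
noncomputable def dVer (k : ℕ) : ℕ → ℕ → ℕ
  | 0, l => if l = 0 then 1 else 0
  | N + 1, l =>
    ∑ p ∈ (Finset.range (k + 1) ×ˢ Finset.range (k + 1)).filter
        (fun p => IsAdm k l p.1 p.2), dVer k N p.2


open Classical in
lemma dver_succ (k N l : ℕ) : dVer k (N+1) l =
    ∑ p ∈ (Finset.range (k + 1) ×ˢ Finset.range (k + 1)).filter
        (fun p => IsAdm k l p.1 p.2), dVer k N p.2 := by
  rfl

open Classical in
lemma dver_one (k l : ℕ) (hl : l ≤ k) : dVer k 1 l = 1 := by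
  rw [dver_succ, Finset.sum_eq_single (l, 0)]
  · simp [dVer]
  · rintro ⟨p1, p2⟩ hp hne
    rcases Nat.eq_zero_or_pos p2 with h0 | h0
    · subst h0
      exfalso
      have hadm : IsAdm k l p1 0 := (Finset.mem_filter.mp hp).2
      obtain ⟨x, y, z, h1, h2, h3, h4⟩ := hadm
      apply hne
      have : p1 = l := by omega
      simp [this]
    · have : p2 ≠ 0 := by omega
      simp [dVer, this]
  · intro hnot
    exfalso; apply hnot
    refine Finset.mem_filter.mpr ⟨Finset.mem_product.mpr
      ⟨Finset.mem_range.mpr (by omega), Finset.mem_range.mpr (by omega)⟩,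
      ⟨0, l, 0, by omega, by omega, by omega, by omega⟩⟩

lemma sig_ext {α P : Type*} {S : Finset α} {Q : α → P → Prop}
    (q1 q2 : (q : {x // x ∈ S}) × {p : P // Q q.1 p})
    (h1 : q1.1.1 = q2.1.1) (h2 : q1.2.1 = q2.2.1) : q1 = q2 := by
  rcases q1 with ⟨⟨v1, hv1⟩, ⟨p1, hp1⟩⟩
  rcases q2 with ⟨⟨v2, hv2⟩, ⟨p2, hp2⟩⟩
  simp only at h1 h2
  subst h1; subst h2
  rfl


/-- The cardinality of the set `C^{(N)}_{k,l}` of combinatorial paths of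
length `N`, level `k` and weight `l` equals the Verlinde number
`d^{(N)}_{k,l}`. -/
theorem stmt_8 (k N l : ℕ) (hk : 1 ≤ k) (hN : 1 ≤ N) (hl : l ≤ k) :
    Nat.card {p : (ℕ → ℕ) × (ℕ → ℕ) // IsCombPath k l N p.1 p.2} = dVer k N l := by
  classical
  induction N, hN using Nat.le_induction generalizing l with
  | base => rw [base_card k l hl, dver_one k l hl]
  | succ N hN ih =>
    set S : Finset (ℕ × ℕ) := (Finset.range (k + 1) ×ˢ Finset.range (k + 1)).filter
        (fun p => IsAdm k l p.1 p.2) with hSdef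
    have e : {p : (ℕ → ℕ) × (ℕ → ℕ) // IsCombPath k l (N+1) p.1 p.2} ≃
        (q : {x // x ∈ S}) × {p : (ℕ → ℕ) × (ℕ → ℕ) // IsCombPath k (q.1).2 N p.1 p.2} := by
      refine ⟨fun p =>
        ⟨⟨(fL'' l p.1.1 p.1.2, fL' l p.1.1 p.1.2), ?_⟩,
         ⟨(tailA p.1.1, tailB p.1.2), (forward hl p.2).2⟩⟩,
        fun q =>
        ⟨(consA (yA l q.1.1.1 q.1.1.2) q.2.1.1,
          consB (min (zA l q.1.1.1 q.1.1.2) (q.1.1.2 - q.2.1.1 0)) q.2.1.2), ?_⟩, ?_, ?_⟩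
      · have H := (forward hl p.2).1
        obtain ⟨e1, e2, e3, e4⟩ := H.eqs
        exact Finset.mem_filter.mpr ⟨Finset.mem_product.mpr
          ⟨Finset.mem_range.mpr (by omega), Finset.mem_range.mpr (by omega)⟩, H⟩
      · have hadm : IsAdm k l q.1.1.1 q.1.1.2 := (Finset.mem_filter.mp q.1.2).2
        obtain ⟨e1, e2, e3, e4⟩ := hadm.eqs
        exact backward hN hl e1 e3 e4 q.2.2
      · rintro ⟨⟨a, b⟩, hp⟩
        obtain ⟨hy, hz, hA, hB⟩ := leftinv hp
        apply Subtype.ext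
        show (consA (yA l (fL'' l a b) (fL' l a b)) (tailA a),
          consB (min (zA l (fL'' l a b) (fL' l a b)) (fL' l a b - tailA a 0)) (tailB b)) = (a, b)
        rw [hy, hz, hA, hB]
      · rintro ⟨⟨⟨l'', l'⟩, hq⟩, ⟨⟨a', b'⟩, hp⟩⟩
        have hadm : IsAdm k l l'' l' := (Finset.mem_filter.mp hq).2
        obtain ⟨e1, e2, e3, e4⟩ := hadm.eqs
        have hb'0 : b' 0 = 0 := hp.2.2.1
        have ha'0 : a' 0 ≤ l' := hp.2.2.2.2.2.1
        obtain ⟨hf1, hf2, hTA, hTB⟩ := rightinv hb'0 ha'0 e1 e3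
        refine sig_ext (Q := fun (x : ℕ × ℕ) (p : (ℕ → ℕ) × (ℕ → ℕ)) => IsCombPath k x.2 N p.1 p.2) _ _ ?_ ?_
        · show (fL'' l (consA (yA l l'' l') a') (consB (min (zA l l'' l') (l' - a' 0)) b'),
            fL' l (consA (yA l l'' l') a') (consB (min (zA l l'' l') (l' - a' 0)) b')) = (l'', l')
          rw [hf1, hf2, e2]
        · show (tailA (consA (yA l l'' l') a'),
            tailB (consB (min (zA l l'' l') (l' - a' 0)) b')) = (a', b')
          rw [hTA, hTB]
    have hc : Nat.card {p : (ℕ → ℕ) × (ℕ → ℕ) // IsCombPath k l (N+1) p.1 p.2} =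
        ∑ r ∈ S, Nat.card {p : (ℕ → ℕ) × (ℕ → ℕ) // IsCombPath k r.2 N p.1 p.2} := by
      rw [Nat.card_congr e]
      letI : ∀ q : {x // x ∈ S},
          Fintype {p : (ℕ → ℕ) × (ℕ → ℕ) // IsCombPath k (q.1).2 N p.1 p.2} :=
        fun q => Fintype.ofFinite _
      rw [Nat.card_eq_fintype_card, Fintype.card_sigma]
      rw [← Finset.sum_coe_sort S
        (fun r => Nat.card {p : (ℕ → ℕ) × (ℕ → ℕ) // IsCombPath k r.2 N p.1 p.2})]
      exact Finset.sum_congr rfl fun q _ => (Nat.card_eq_fintype_card).symm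
    rw [hc, dver_succ]
    apply Finset.sum_congr rfl
    intro r hr
    have hr2 : r.2 ≤ k := by
      have h1 := (Finset.mem_product.mp (Finset.mem_filter.mp hr).1).2
      rw [Finset.mem_range] at h1
      omega
    exact ih r.2 hr2
end
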